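/- Let Λ be a finite nonempty type, d ≥ 1, B : Λ → Λ → Matrix (Fin d) (Fin d) ℂ with ∑_{i∈Λ} (B_j^i)ᴴ * B_j^i = 1 for every j, and ρ : Λ → Matrix (Fin d) (Fin d) ℂ with each ρ_j positive semidefinite and Tr(ρ_j) a positive real. Set M_j^i := B_j^i ⊗ₖ E_{ij}, φ_{jj'}(b) := ((Tr ρ_j)^{1/2} (Tr ρ_{j'})^{1/2})⁻¹ · Tr(((ρ_j^{1/2} * ρ_{j'}^{1/2}) ⊗ₖ E_{j' j}) * b), and φ_j := φ_{jj}. Then for every m ≥ 1 and every a ∈ Matrix (Fin d × Λ) (Fin d × Λ) ℂ, the backward Markov operator satisfies: ∑_{i,j,j'∈Λ} (φ_{jj'}(a) · (φ_{jj'}(1))^m) • ((M_j^i)ᴴ * M_{j'}^i) = ∑_{j∈Λ} φ_j(a) • (1 ⊗ₖ E_{jj}). -/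

import Mathlib

open Matrix Kronecker
open scoped ComplexOrder

/-- The positive semidefinite square root, as defined in the older Mathlib
(`Matrix.PosSemidef.sqrt`, since removed). -/
noncomputable def Matrix.PosSemidef.sqrt {n 𝕜 : Type*} [Fintype n] [RCLike 𝕜] [DecidableEq n]
    {A : Matrix n n 𝕜} (hA : A.PosSemidef) : Matrix n n 𝕜 :=
  hA.1.eigenvectorUnitary.1 * diagonal ((↑) ∘ (√·) ∘ hA.1.eigenvalues) *
    (star hA.1.eigenvectorUnitary : Matrix n n 𝕜)

/-- The functional `φ_{jj'}(b) = ((Tr ρ_j)^{1/2}(Tr ρ_{j'})^{1/2})⁻¹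
Tr((ρ_j^{1/2} ρ_{j'}^{1/2} ⊗ₖ E_{j'j}) b)`. -/
noncomputable def phiJJ {Λ : Type*} [Fintype Λ] [DecidableEq Λ] {d : ℕ}
    (ρ : Λ → Matrix (Fin d) (Fin d) ℂ) (hρ : ∀ j, (ρ j).PosSemidef) (j j' : Λ)
    (b : Matrix (Fin d × Λ) (Fin d × Λ) ℂ) : ℂ :=
  ((Real.sqrt (ρ j).trace.re * Real.sqrt (ρ j').trace.re : ℝ) : ℂ)⁻¹ *
    ((((hρ j).sqrt * (hρ j').sqrt) ⊗ₖ single j' j (1 : ℂ)) * b).trace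

/-- The dilated operator `M_j^i = B_j^i ⊗ₖ E_{ij}`. -/
noncomputable def Mop {Λ : Type*} [Fintype Λ] [DecidableEq Λ] {d : ℕ}
    (B : Λ → Λ → Matrix (Fin d) (Fin d) ℂ) (j i : Λ) :
    Matrix (Fin d × Λ) (Fin d × Λ) ℂ :=
  B j i ⊗ₖ single i j (1 : ℂ)

/-! Since `(M_j^i)ᴴ M_{j'}^i = (B_j^i)ᴴ B_{j'}^i ⊗ₖ E_{jj'}` and `φ_{jj'}(1)` is `Tr ρ_j / Tr ρ_j = 1`
for `j' = j` but `Tr E_{j'j} = 0` otherwise, the factor `φ_{jj'}(1)^m` (with `m ≥ 1`) kills all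
off-diagonal terms; on the diagonal the Kraus condition `∑_i (B_j^i)ᴴ B_j^i = 1` sums out `i`. -/

theorem Matrix.sum_kronecker {ι l m n p α : Type*} [NonUnitalNonAssocSemiring α] (s : Finset ι)
    (A : ι → Matrix l m α) (C : Matrix n p α) : (∑ i ∈ s, A i) ⊗ₖ C = ∑ i ∈ s, A i ⊗ₖ C := by
  ext
  simp [Matrix.sum_apply, Finset.sum_mul]

theorem Matrix.PosSemidef.sqrt_mul_self {n 𝕜 : Type*} [Fintype n] [RCLike 𝕜] [DecidableEq n]
    {A : Matrix n n 𝕜} (hA : A.PosSemidef) : hA.sqrt * hA.sqrt = A := by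
  conv_rhs => rw [hA.1.spectral_theorem, Unitary.conjStarAlgAut_apply]
  have hU : (star hA.1.eigenvectorUnitary : Matrix n n 𝕜) * hA.1.eigenvectorUnitary.1 = 1 :=
    Unitary.coe_star_mul_self _
  simp only [Matrix.PosSemidef.sqrt, Matrix.mul_assoc]
  rw [← Matrix.mul_assoc _ hA.1.eigenvectorUnitary.1, hU, Matrix.one_mul,
    ← Matrix.mul_assoc (diagonal _), diagonal_mul_diagonal]
  congr 3
  funext i
  simp only [Function.comp_apply, ← RCLike.ofReal_mul, Real.mul_self_sqrt (hA.eigenvalues_nonneg i)]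

section OpenQuantumWalk

variable {Λ : Type*} [Fintype Λ] [DecidableEq Λ] {d : ℕ}

theorem phiJJ_one_of_ne (ρ : Λ → Matrix (Fin d) (Fin d) ℂ) (hρ : ∀ j, (ρ j).PosSemidef)
    {j j' : Λ} (h : j ≠ j') : phiJJ ρ hρ j j' 1 = 0 := by
  rw [phiJJ, mul_one, trace_kronecker, trace_single_eq_of_ne j' j 1 h.symm, mul_zero, mul_zero]

theorem phiJJ_self_one (ρ : Λ → Matrix (Fin d) (Fin d) ℂ) (hρ : ∀ j, (ρ j).PosSemidef)
    {j : Λ} (hTr : 0 < (ρ j).trace) : phiJJ ρ hρ j j 1 = 1 := by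
  obtain ⟨hre, him⟩ := Complex.lt_def.mp hTr
  have htr : (ρ j).trace = ((ρ j).trace.re : ℂ) := Complex.ext rfl (by simp [← him])
  rw [phiJJ, mul_one, trace_kronecker, trace_single_eq_same, (hρ j).sqrt_mul_self,
    Real.mul_self_sqrt hre.le, mul_one, ← htr, inv_mul_cancel₀ hTr.ne']

theorem Mop_conjTranspose_mul (B : Λ → Λ → Matrix (Fin d) (Fin d) ℂ) (i j j' : Λ) :
    (Mop B j i)ᴴ * Mop B j' i = ((B j i)ᴴ * B j' i) ⊗ₖ single j j' (1 : ℂ) := by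
  rw [Mop, Mop, conjTranspose_kronecker, conjTranspose_single, star_one, ← mul_kronecker_mul,
    single_mul_single_same, one_mul]

end OpenQuantumWalk

theorem stmt_9_general {Λ : Type*} [Fintype Λ] [DecidableEq Λ] {d : ℕ}
    (B : Λ → Λ → Matrix (Fin d) (Fin d) ℂ)
    (hB : ∀ j : Λ, ∑ i : Λ, (B j i)ᴴ * B j i = 1)
    (ρ : Λ → Matrix (Fin d) (Fin d) ℂ) (hρ : ∀ j, (ρ j).PosSemidef)
    (hTr : ∀ j, 0 < (ρ j).trace) (m : ℕ) (hm : 1 ≤ m)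
    (a : Matrix (Fin d × Λ) (Fin d × Λ) ℂ) :
    ∑ i : Λ, ∑ j : Λ, ∑ j' : Λ,
        (phiJJ ρ hρ j j' a * (phiJJ ρ hρ j j' 1) ^ m) • ((Mop B j i)ᴴ * Mop B j' i) =
      ∑ j : Λ, phiJJ ρ hρ j j a • ((1 : Matrix (Fin d) (Fin d) ℂ) ⊗ₖ single j j (1 : ℂ)) := by
  simp only [Mop_conjTranspose_mul]
  rw [Finset.sum_comm]
  refine Finset.sum_congr rfl fun j _ => ?_
  rw [Finset.sum_comm]
  simp only [← Finset.smul_sum, ← Matrix.sum_kronecker]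
  rw [Finset.sum_eq_single j]
  · rw [phiJJ_self_one ρ hρ (hTr j), one_pow, mul_one, hB j]
  · intro j' _ hne
    rw [phiJJ_one_of_ne ρ hρ hne.symm, zero_pow (by omega), mul_zero, zero_smul]
  · simp

/-- the backward Markov operator of the transition expectation satisfies
`P(a) = ∑ j, φ_j(a) • (1 ⊗ₖ E_{jj})`, i.e.
`∑ i j j', (φ_{jj'}(a) (φ_{jj'}(1))^m) • ((M_j^i)ᴴ M_{j'}^i) = ∑ j, φ_{jj}(a) • (1 ⊗ₖ E_{jj})`. -/
theorem stmt_9 {Λ : Type*} [Fintype Λ] [DecidableEq Λ] [Nonempty Λ] {d : ℕ} (hd : 1 ≤ d)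
    (B : Λ → Λ → Matrix (Fin d) (Fin d) ℂ)
    (hB : ∀ j : Λ, ∑ i : Λ, (B j i)ᴴ * B j i = 1)
    (ρ : Λ → Matrix (Fin d) (Fin d) ℂ) (hρ : ∀ j, (ρ j).PosSemidef)
    (hTr : ∀ j, 0 < (ρ j).trace) (m : ℕ) (hm : 1 ≤ m)
    (a : Matrix (Fin d × Λ) (Fin d × Λ) ℂ) :
    ∑ i : Λ, ∑ j : Λ, ∑ j' : Λ,
        (phiJJ ρ hρ j j' a * (phiJJ ρ hρ j j' 1) ^ m) • ((Mop B j i)ᴴ * Mop B j' i) =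
      ∑ j : Λ, phiJJ ρ hρ j j a • ((1 : Matrix (Fin d) (Fin d) ℂ) ⊗ₖ single j j (1 : ℂ)) :=
  stmt_9_general B hB ρ hρ hTr m hm a
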